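/- arXiv:2407.20177 — 5 statements merged into one kernel-verified Lean document; each statement's English description precedes it below -/
import Mathlib

section
/- Let m ≥ 1, β_i > 0, γ_i > 0 for i = 1,…,m, and let N > 0. If N ∈ S(N) = {N ∈ ℝ^m : N_i > 0 for all i, ∑_{i=1}^m N_i = N} satisfies β_a · γ_a · (N_a)^{-γ_a - 1} = β_b · γ_b · (N_b)^{-γ_b - 1} for every pair of indices a, b, then N minimizes f(N) = ∑_{i=1}^m β_i · N_i^{-γ_i} over S(N); that is, f(N) ≤ f(M) for all M ∈ S(N). -/
open Finset Real

theorem one_add_mul_sub_one_le_rpow_of_nonpos {u p : ℝ} (hu : 0 < u) (hp : p ≤ 0) :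
    1 + p * (u - 1) ≤ u ^ p :=
  calc 1 + p * (u - 1)
      ≤ p * log u + 1 := by nlinarith [log_le_sub_one_of_pos hu]
    _ ≤ exp (p * log u) := add_one_le_exp _
    _ = u ^ p := by rw [rpow_def_of_pos hu, mul_comm]

theorem rpow_add_mul_rpow_sub_one_mul_sub_le_of_nonpos {x y p : ℝ} (hx : 0 < x) (hy : 0 < y)
    (hp : p ≤ 0) : x ^ p + p * x ^ (p - 1) * (y - x) ≤ y ^ p :=
  calc x ^ p + p * x ^ (p - 1) * (y - x)
      = x ^ p * (1 + p * (y / x - 1)) := by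
        rw [rpow_sub_one hx.ne']
        field_simp
    _ ≤ x ^ p * (y / x) ^ p :=
        mul_le_mul_of_nonneg_left (one_add_mul_sub_one_le_rpow_of_nonpos (div_pos hy hx) hp)
          (rpow_nonneg hx.le p)
    _ = y ^ p := by rw [div_rpow hy.le hx.le, mul_div_cancel₀ _ (rpow_pos_of_pos hx p).ne']

/-- Each summand lies above its tangent line at `x i`; since all slopes equal `μ`, the linear parts
sum to `μ * (∑ i, y i - ∑ i, x i) = 0`. -/
theorem sum_mul_rpow_neg_le_of_marginal_eq {ι : Type*} [Fintype ι] {β γ x y : ι → ℝ} {μ : ℝ}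
    (hβ : ∀ i, 0 ≤ β i) (hγ : ∀ i, 0 ≤ γ i) (hx : ∀ i, 0 < x i) (hy : ∀ i, 0 < y i)
    (hsum : ∑ i, y i = ∑ i, x i) (hμ : ∀ i, β i * γ i * x i ^ (-γ i - 1) = μ) :
    ∑ i, β i * x i ^ (-γ i) ≤ ∑ i, β i * y i ^ (-γ i) := by
  have tangent : ∀ i, β i * x i ^ (-γ i) - μ * (y i - x i) ≤ β i * y i ^ (-γ i) := by
    intro i
    have h := mul_le_mul_of_nonneg_left
      (rpow_add_mul_rpow_sub_one_mul_sub_le_of_nonpos (hx i) (hy i) (neg_nonpos.2 (hγ i))) (hβ i)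
    rw [← hμ i]
    linarith
  calc ∑ i, β i * x i ^ (-γ i)
      = ∑ i, (β i * x i ^ (-γ i) - μ * (y i - x i)) := by
        rw [sum_sub_distrib, ← mul_sum, sum_sub_distrib, hsum, sub_self, mul_zero, sub_zero]
    _ ≤ ∑ i, β i * y i ^ (-γ i) := sum_le_sum fun i _ => tangent i

theorem minimizer_of_kkt_domain_loss_general (m : ℕ) (hm : 1 ≤ m) (β γ : Fin m → ℝ)
    (hβ : ∀ i, 0 < β i) (hγ : ∀ i, 0 < γ i) (N : ℝ)
    (x : Fin m → ℝ) (hx_pos : ∀ i, 0 < x i) (hx_sum : ∑ i, x i = N)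
    (hkkt : ∀ a b : Fin m,
      β a * γ a * x a ^ (-γ a - 1) = β b * γ b * x b ^ (-γ b - 1)) :
    ∀ z : Fin m → ℝ, (∀ i, 0 < z i) → ∑ i, z i = N →
      ∑ i, β i * x i ^ (-γ i) ≤ ∑ i, β i * z i ^ (-γ i) := by
  intro z hz_pos hz_sum
  let i₀ : Fin m := ⟨0, hm⟩
  exact sum_mul_rpow_neg_le_of_marginal_eq (fun i => (hβ i).le) (fun i => (hγ i).le) hx_pos
    hz_pos (hz_sum.trans hx_sum.symm) (fun i => hkkt i i₀)

/-- Sufficiency of the first-order (KKT) conditions: a feasible point at which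
all weighted marginal losses coincide is a global minimizer on `S(N)`. -/
theorem minimizer_of_kkt_domain_loss (m : ℕ) (hm : 1 ≤ m) (β γ : Fin m → ℝ)
    (hβ : ∀ i, 0 < β i) (hγ : ∀ i, 0 < γ i) (N : ℝ) (hN : 0 < N)
    (x : Fin m → ℝ) (hx_pos : ∀ i, 0 < x i) (hx_sum : ∑ i, x i = N)
    (hkkt : ∀ a b : Fin m,
      β a * γ a * x a ^ (-γ a - 1) = β b * γ b * x b ^ (-γ b - 1)) :
    ∀ z : Fin m → ℝ, (∀ i, 0 < z i) → ∑ i, z i = N →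
      ∑ i, β i * x i ^ (-γ i) ≤ ∑ i, β i * z i ^ (-γ i) :=
  minimizer_of_kkt_domain_loss_general m hm β γ hβ hγ N x hx_pos hx_sum hkkt
end

section
/- Let m ≥ 1, β_i > 0, γ_i > 0 for i = 1,…,m. Let N* be the minimizer of f(N) = ∑_{i=1}^m β_i · N_i^{-γ_i} on S(N^{(1)}) and M* the minimizer of f on S(N^{(2)}), for budgets N^{(1)}, N^{(2)} > 0. Fix an index b and suppose M_b* = m₀ · N_b* for some scalar m₀ > 0. Then for every index a one has M_a* = m₀^{(γ_b + 1)/(γ_a + 1)} · N_a*. -/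
/-!
At an optimal allocation, moving mass `t` from domain `j` to domain `i` keeps the budget, so
differentiating at `t = 0` equalises the marginal losses `β i * γ i * N i ^ (-γ i - 1)` across
domains. Comparing these equalities at the two budgets gives
`(M a / N a) ^ (-γ a - 1) = (M b / N b) ^ (-γ b - 1) = m₀ ^ (-γ b - 1)`, and taking the
`(-γ a - 1)`-th root yields the scaling law.
-/

open Finset Real

open Filter Topology in
theorem hasDerivAt_eq_of_isMin_sum_eq {ι : Type*} [Fintype ι] [DecidableEq ι]
    {f : ι → ℝ → ℝ} {f' : ι → ℝ} {x : ι → ℝ} (hx : ∀ i, 0 < x i)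
    (hf : ∀ i, HasDerivAt (f i) (f' i) (x i))
    (hmin : ∀ z : ι → ℝ, (∀ i, 0 < z i) → ∑ i, z i = ∑ i, x i →
      ∑ i, f i (x i) ≤ ∑ i, f i (z i))
    (i j : ι) : f' i = f' j := by
  set e : ι → ℝ := Pi.single i 1 - Pi.single j 1
  have he : ∑ k, e k = 0 := by simp [e, sum_sub_distrib]
  have hderiv : HasDerivAt (fun t => ∑ k, f k (x k + t * e k)) (∑ k, f' k * e k) 0 :=
    HasDerivAt.fun_sum fun k _ =>
      (hf k).comp_of_eq 0 ((hasDerivAt_mul_const (e k)).const_add (x k)) (by simp)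
  have hmin_line : IsLocalMin (fun t => ∑ k, f k (x k + t * e k)) 0 := by
    have hpos : ∀ᶠ t in 𝓝 (0 : ℝ), ∀ k, 0 < x k + t * e k :=
      eventually_all.2 fun k => continuousAt_const.eventually_lt
        (by fun_prop : Continuous fun t : ℝ => x k + t * e k).continuousAt (by simpa using hx k)
    filter_upwards [hpos] with t ht
    simpa using hmin _ ht (by simp [sum_add_distrib, ← mul_sum, he])
  have h := hmin_line.hasDerivAt_eq_zero hderiv
  simp only [e, Pi.sub_apply, Pi.single_apply, mul_sub, mul_ite, mul_one, mul_zero,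
    sum_sub_distrib, sum_ite_eq', mem_univ, ↓reduceIte] at h
  linarith

theorem powerLaw_marginal_eq_of_isMin_sum_eq {ι : Type*} [Fintype ι] [DecidableEq ι]
    (β γ x : ι → ℝ) (hx : ∀ i, 0 < x i)
    (hmin : ∀ z : ι → ℝ, (∀ i, 0 < z i) → ∑ i, z i = ∑ i, x i →
      ∑ i, β i * x i ^ (-γ i) ≤ ∑ i, β i * z i ^ (-γ i))
    (i j : ι) : β i * γ i * x i ^ (-γ i - 1) = β j * γ j * x j ^ (-γ j - 1) := by
  have hderiv : ∀ k, HasDerivAt (fun t => β k * t ^ (-γ k))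
      (β k * (-γ k * x k ^ (-γ k - 1))) (x k) :=
    fun k => (hasDerivAt_rpow_const (Or.inl (hx k).ne')).const_mul (β k)
  have h := hasDerivAt_eq_of_isMin_sum_eq hx hderiv hmin i j
  linarith

theorem eq_rpow_div_of_rpow_eq {r s p q : ℝ} (hr : 0 ≤ r) (hs : 0 ≤ s) (hp : p ≠ 0)
    (h : r ^ p = s ^ q) : r = s ^ (q / p) := by
  rw [← rpow_rpow_inv hr hp, h, ← rpow_mul hs, div_eq_mul_inv]

theorem optimal_allocation_cross_scaling_general (m : ℕ)
    (β γ : Fin m → ℝ) (hβ : ∀ i, 0 < β i) (hγ : ∀ i, 0 < γ i)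
    (N₁ N₂ : ℝ)
    (x : Fin m → ℝ) (hx_pos : ∀ i, 0 < x i) (hx_sum : ∑ i, x i = N₁)
    (hx_min : ∀ z : Fin m → ℝ, (∀ i, 0 < z i) → ∑ i, z i = N₁ →
      ∑ i, β i * x i ^ (-γ i) ≤ ∑ i, β i * z i ^ (-γ i))
    (y : Fin m → ℝ) (hy_pos : ∀ i, 0 < y i) (hy_sum : ∑ i, y i = N₂)
    (hy_min : ∀ z : Fin m → ℝ, (∀ i, 0 < z i) → ∑ i, z i = N₂ →
      ∑ i, β i * y i ^ (-γ i) ≤ ∑ i, β i * z i ^ (-γ i))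
    (b : Fin m) (m₀ : ℝ) (hm₀ : 0 < m₀) (hb : y b = m₀ * x b) :
    ∀ a : Fin m, y a = m₀ ^ ((γ b + 1) / (γ a + 1)) * x a := by
  intro a
  have hx := powerLaw_marginal_eq_of_isMin_sum_eq β γ x hx_pos
    (fun z hz hs => hx_min z hz (hs.trans hx_sum)) a b
  have hy := powerLaw_marginal_eq_of_isMin_sum_eq β γ y hy_pos
    (fun z hz hs => hy_min z hz (hs.trans hy_sum)) a b
  have hc : ∀ k, β k * γ k ≠ 0 := fun k => (mul_pos (hβ k) (hγ k)).ne'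
  have hratio : (y a / x a) ^ (-γ a - 1) = m₀ ^ (-γ b - 1) := by
    rw [div_rpow (hy_pos a).le (hx_pos a).le, ← mul_div_mul_left _ _ (hc a), hy, hx,
      mul_div_mul_left _ _ (hc b), hb, mul_rpow hm₀.le (hx_pos b).le, mul_div_assoc,
      div_self (rpow_pos_of_pos (hx_pos b) _).ne', mul_one]
  have hexp : (-γ b - 1) / (-γ a - 1) = (γ b + 1) / (γ a + 1) := by
    rw [← neg_div_neg_eq]; ring_nf
  have hγa : -γ a - 1 ≠ 0 := by linarith [hγ a]
  rw [← hexp, ← eq_rpow_div_of_rpow_eq (div_pos (hy_pos a) (hx_pos a)).le hm₀.le hγa hratio,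
    div_mul_cancel₀ _ (hx_pos a).ne']

/-- If at two budgets the optimal allocation of domain `b` scales by a factor
`m₀`, then the optimal allocation of any domain `a` scales by the factor
`m₀ ^ ((γ b + 1) / (γ a + 1))`. -/
theorem optimal_allocation_cross_scaling (m : ℕ) (hm : 1 ≤ m)
    (β γ : Fin m → ℝ) (hβ : ∀ i, 0 < β i) (hγ : ∀ i, 0 < γ i)
    (N₁ N₂ : ℝ) (hN₁ : 0 < N₁) (hN₂ : 0 < N₂)
    (x : Fin m → ℝ) (hx_pos : ∀ i, 0 < x i) (hx_sum : ∑ i, x i = N₁)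
    (hx_min : ∀ z : Fin m → ℝ, (∀ i, 0 < z i) → ∑ i, z i = N₁ →
      ∑ i, β i * x i ^ (-γ i) ≤ ∑ i, β i * z i ^ (-γ i))
    (y : Fin m → ℝ) (hy_pos : ∀ i, 0 < y i) (hy_sum : ∑ i, y i = N₂)
    (hy_min : ∀ z : Fin m → ℝ, (∀ i, 0 < z i) → ∑ i, z i = N₂ →
      ∑ i, β i * y i ^ (-γ i) ≤ ∑ i, β i * z i ^ (-γ i))
    (b : Fin m) (m₀ : ℝ) (hm₀ : 0 < m₀) (hb : y b = m₀ * x b) :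
    ∀ a : Fin m, y a = m₀ ^ ((γ b + 1) / (γ a + 1)) * x a :=
  optimal_allocation_cross_scaling_general m β γ hβ hγ N₁ N₂ x hx_pos hx_sum hx_min y hy_pos hy_sum
    hy_min b m₀ hm₀ hb
end

section
/- Let m ≥ 1, β_i > 0, γ_i > 0 for i = 1,…,m. Let N*(N^{(1)}) and N*(N^{(2)}) be the optimal allocations (minimizers of f(N) = ∑_{i=1}^m β_i · N_i^{-γ_i} on S(N^{(1)}) and S(N^{(2)}) respectively) for two budgets N^{(1)}, N^{(2)} > 0. Define M ∈ ℝ^m elementwise by M_i = (N_i*(N^{(2)}))² / N_i*(N^{(1)}), and let N^{(3)} = ∑_{i=1}^m M_i. Then M is the optimal allocation at budget N^{(3)}: M minimizes f on S(N^{(3)}). -/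
open Finset Real

open scoped Topology

/-! The loss is a sum of convex one-variable terms, so a positive allocation is optimal for its
budget exactly when all marginal losses `-β_i γ_i N_i^(-γ_i-1)` coincide: necessity by moving
budget between two coordinates, sufficiency by the tangent-line inequality. As `t ↦ t^(-γ-1)` is
multiplicative, the marginal loss at `y_i² / x_i` is the square of the marginal loss at `y_i`
divided by the one at `x_i`, and both of these are independent of `i`. -/

theorem ConvexOn.add_mul_sub_le_of_hasDerivAt {S : Set ℝ} {f : ℝ → ℝ} {f' x y : ℝ}
    (hfc : ConvexOn ℝ S f) (hx : x ∈ S) (hy : y ∈ S) (hf : HasDerivAt f f' x) :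
    f x + f' * (y - x) ≤ f y := by
  rcases lt_trichotomy x y with hxy | rfl | hxy
  · have := hfc.le_slope_of_hasDerivAt hx hy hxy hf
    rw [slope_def_field, le_div_iff₀ (sub_pos.2 hxy)] at this
    linarith
  · simp
  · have := hfc.slope_le_of_hasDerivAt hy hx hxy hf
    rw [slope_def_field, div_le_iff₀ (sub_pos.2 hxy)] at this
    linarith

theorem convexOn_rpow_of_nonpos {p : ℝ} (hp : p ≤ 0) :
    ConvexOn ℝ (Set.Ioi 0) fun x : ℝ ↦ x ^ p := by
  refine MonotoneOn.convexOn_of_deriv (convex_Ioi 0)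
    (fun x hx ↦ (continuousAt_rpow_const x p (Or.inl (ne_of_gt hx))).continuousWithinAt)
    (fun x hx ↦ (differentiableAt_rpow_const_of_ne p
      (ne_of_gt (interior_subset hx : (0:ℝ) < x))).differentiableWithinAt) ?_
  rw [interior_Ioi]
  intro a ha b _ hab
  simp only [Real.deriv_rpow_const]
  exact mul_le_mul_of_nonpos_left (rpow_le_rpow_of_nonpos ha hab (by linarith)) hp

section Allocation

variable {ι : Type*} [Fintype ι]

def IsOptimalAllocation (f : ι → ℝ → ℝ) (N : ℝ) (x : ι → ℝ) : Prop :=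
  (∀ i, 0 < x i) ∧ ∑ i, x i = N ∧
    ∀ z : ι → ℝ, (∀ i, 0 < z i) → ∑ i, z i = N → ∑ i, f i (x i) ≤ ∑ i, f i (z i)

theorem IsOptimalAllocation.hasDerivAt_eq [DecidableEq ι] {f : ι → ℝ → ℝ} {f' : ι → ℝ}
    {N : ℝ} {x : ι → ℝ} (hx : IsOptimalAllocation f N x)
    (hf : ∀ k, HasDerivAt (f k) (f' k) (x k)) (i j : ι) : f' i = f' j := by
  obtain ⟨hx_pos, hx_sum, hx_min⟩ := hx
  -- moving budget from `j` to `i` keeps the total fixed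
  set v : ι → ℝ := Pi.single i 1 - Pi.single j 1
  have hv_sum : ∑ k, v k = 0 := by simp [v]
  have hmin : IsLocalMin (fun t : ℝ ↦ ∑ k, f k (x k + t * v k)) 0 := by
    have hpos : ∀ᶠ t in 𝓝 (0 : ℝ), ∀ k, 0 < x k + t * v k :=
      Filter.eventually_all.2 fun k ↦
        ((continuous_const.add (continuous_id.mul continuous_const)).tendsto' 0 (x k)
          (by simp)).eventually (lt_mem_nhds (hx_pos k))
    filter_upwards [hpos] with t ht
    simpa using hx_min _ ht (by simp [sum_add_distrib, ← mul_sum, hv_sum, hx_sum])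
  have hderiv : HasDerivAt (fun t : ℝ ↦ ∑ k, f k (x k + t * v k)) (∑ k, f' k * v k) 0 :=
    HasDerivAt.fun_sum fun k _ ↦
      (hf k).comp_of_eq (x := 0) ((hasDerivAt_mul_const (v k)).const_add (x k)) (by simp)
  have := hmin.hasDerivAt_eq_zero hderiv
  simpa [v, mul_sub, sum_sub_distrib, sub_eq_zero, Pi.single_apply] using this

theorem isOptimalAllocation_of_hasDerivAt_eq {f : ι → ℝ → ℝ} {f' : ι → ℝ} {x : ι → ℝ}
    (hconv : ∀ k, ConvexOn ℝ (Set.Ioi 0) (f k)) (hx_pos : ∀ k, 0 < x k)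
    (hf : ∀ k, HasDerivAt (f k) (f' k) (x k)) (heq : ∀ i j, f' i = f' j) :
    IsOptimalAllocation f (∑ i, x i) x := by
  refine ⟨hx_pos, rfl, fun z hz hz_sum ↦ ?_⟩
  rcases isEmpty_or_nonempty ι with _ | ⟨⟨i₀⟩⟩
  · simp
  calc ∑ k, f k (x k) = ∑ k, (f k (x k) + f' i₀ * (z k - x k)) := by
        simp [sum_add_distrib, ← mul_sum, sum_sub_distrib, hz_sum]
    _ = ∑ k, (f k (x k) + f' k * (z k - x k)) := by simp only [heq _ i₀]
    _ ≤ ∑ k, f k (z k) := sum_le_sum fun k _ ↦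
        (hconv k).add_mul_sub_le_of_hasDerivAt (hx_pos k) (hz k) (hf k)

end Allocation

noncomputable def powerLossDeriv (β γ t : ℝ) : ℝ := -(β * γ * t ^ (-γ - 1))

theorem hasDerivAt_powerLoss (β γ : ℝ) {x : ℝ} (hx : x ≠ 0) :
    HasDerivAt (fun t ↦ β * t ^ (-γ)) (powerLossDeriv β γ x) x :=
  ((hasDerivAt_rpow_const (Or.inl hx)).const_mul β).congr_deriv (by unfold powerLossDeriv; ring)

theorem convexOn_powerLoss {β γ : ℝ} (hβ : 0 ≤ β) (hγ : 0 ≤ γ) :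
    ConvexOn ℝ (Set.Ioi 0) fun t : ℝ ↦ β * t ^ (-γ) :=
  (convexOn_rpow_of_nonpos (neg_nonpos.2 hγ)).smul hβ

theorem powerLossDeriv_sq_div (β γ : ℝ) {x y : ℝ} (hx : 0 < x) (hy : 0 < y) :
    powerLossDeriv β γ (y ^ 2 / x) = powerLossDeriv β γ y ^ 2 / powerLossDeriv β γ x := by
  have hpow : (y ^ 2 / x) ^ (-γ - 1) = (y ^ (-γ - 1)) ^ 2 / x ^ (-γ - 1) := by
    rw [div_rpow (by positivity) hx.le, ← rpow_natCast, ← rpow_natCast, ← rpow_mul hy.le,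
      ← rpow_mul hy.le, mul_comm]
  have hx_pow : 0 < x ^ (-γ - 1) := rpow_pos_of_pos hx _
  rcases eq_or_ne (β * γ) 0 with h | h
  · simp [powerLossDeriv, h]
  · simp only [powerLossDeriv, hpow]
    field_simp

theorem optimal_allocation_projection_square_general (m : ℕ)
    (β γ : Fin m → ℝ) (hβ : ∀ i, 0 < β i) (hγ : ∀ i, 0 < γ i)
    (N₁ N₂ : ℝ)
    (x : Fin m → ℝ) (hx_pos : ∀ i, 0 < x i) (hx_sum : ∑ i, x i = N₁)
    (hx_min : ∀ z : Fin m → ℝ, (∀ i, 0 < z i) → ∑ i, z i = N₁ →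
      ∑ i, β i * x i ^ (-γ i) ≤ ∑ i, β i * z i ^ (-γ i))
    (y : Fin m → ℝ) (hy_pos : ∀ i, 0 < y i) (hy_sum : ∑ i, y i = N₂)
    (hy_min : ∀ z : Fin m → ℝ, (∀ i, 0 < z i) → ∑ i, z i = N₂ →
      ∑ i, β i * y i ^ (-γ i) ≤ ∑ i, β i * z i ^ (-γ i))
    (M : Fin m → ℝ) (hM : ∀ i, M i = (y i) ^ 2 / x i)
    (N₃ : ℝ) (hN₃ : N₃ = ∑ i, M i) :
    (∀ i, 0 < M i) ∧ ∑ i, M i = N₃ ∧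
      ∀ z : Fin m → ℝ, (∀ i, 0 < z i) → ∑ i, z i = N₃ →
        ∑ i, β i * M i ^ (-γ i) ≤ ∑ i, β i * z i ^ (-γ i) := by
  set f : Fin m → ℝ → ℝ := fun i t ↦ β i * t ^ (-γ i)
  have hx : IsOptimalAllocation f N₁ x := ⟨hx_pos, hx_sum, hx_min⟩
  have hy : IsOptimalAllocation f N₂ y := ⟨hy_pos, hy_sum, hy_min⟩
  have hderiv {v : Fin m → ℝ} (hv : ∀ i, 0 < v i) (i : Fin m) :
      HasDerivAt (f i) (powerLossDeriv (β i) (γ i) (v i)) (v i) :=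
    hasDerivAt_powerLoss _ _ (hv i).ne'
  have hM_pos (i : Fin m) : 0 < M i := by
    rw [hM i]; exact div_pos (pow_pos (hy_pos i) 2) (hx_pos i)
  have hM_deriv (i : Fin m) : powerLossDeriv (β i) (γ i) (M i) =
      powerLossDeriv (β i) (γ i) (y i) ^ 2 / powerLossDeriv (β i) (γ i) (x i) :=
    hM i ▸ powerLossDeriv_sq_div _ _ (hx_pos i) (hy_pos i)
  subst hN₃
  refine isOptimalAllocation_of_hasDerivAt_eq (fun i ↦ convexOn_powerLoss (hβ i).le (hγ i).le)
    hM_pos (hderiv hM_pos) fun i j ↦ ?_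
  rw [hM_deriv, hM_deriv, hx.hasDerivAt_eq (hderiv hx_pos) i j,
    hy.hasDerivAt_eq (hderiv hy_pos) i j]

/-- Scale-dependent optimal composition, case `k = 1`: from the optimal
allocations at two budgets, the elementwise allocation
`M i = (N_i*(N⁽²⁾))² / N_i*(N⁽¹⁾)` is optimal for the budget `∑ i, M i`. -/
theorem optimal_allocation_projection_square (m : ℕ) (hm : 1 ≤ m)
    (β γ : Fin m → ℝ) (hβ : ∀ i, 0 < β i) (hγ : ∀ i, 0 < γ i)
    (N₁ N₂ : ℝ) (hN₁ : 0 < N₁) (hN₂ : 0 < N₂)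
    (x : Fin m → ℝ) (hx_pos : ∀ i, 0 < x i) (hx_sum : ∑ i, x i = N₁)
    (hx_min : ∀ z : Fin m → ℝ, (∀ i, 0 < z i) → ∑ i, z i = N₁ →
      ∑ i, β i * x i ^ (-γ i) ≤ ∑ i, β i * z i ^ (-γ i))
    (y : Fin m → ℝ) (hy_pos : ∀ i, 0 < y i) (hy_sum : ∑ i, y i = N₂)
    (hy_min : ∀ z : Fin m → ℝ, (∀ i, 0 < z i) → ∑ i, z i = N₂ →
      ∑ i, β i * y i ^ (-γ i) ≤ ∑ i, β i * z i ^ (-γ i))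
    (M : Fin m → ℝ) (hM : ∀ i, M i = (y i) ^ 2 / x i)
    (N₃ : ℝ) (hN₃ : N₃ = ∑ i, M i) :
    (∀ i, 0 < M i) ∧ ∑ i, M i = N₃ ∧
      ∀ z : Fin m → ℝ, (∀ i, 0 < z i) → ∑ i, z i = N₃ →
        ∑ i, β i * M i ^ (-γ i) ≤ ∑ i, β i * z i ^ (-γ i) :=
  optimal_allocation_projection_square_general m β γ hβ hγ N₁ N₂ x hx_pos hx_sum hx_min y hy_pos
    hy_sum hy_min M hM N₃ hN₃
end

section
/- Let m ≥ 1, β_i > 0, γ_i > 0 for i = 1,…,m. Let N*(N^{(1)}), N*(N^{(2)}), N*(N^{(3)}) be the optimal allocations (minimizers of f(N) = ∑_{i=1}^m β_i · N_i^{-γ_i} on the respective feasible sets) for three positive budgets with N^{(1)} ≠ N^{(2)}. Then there exists a real constant k such that for every index i, N_i*(N^{(3)}) = N_i*(N^{(2)}) · ( N_i*(N^{(2)}) / N_i*(N^{(1)}) )^k. Moreover, if N^{(1)} < N^{(2)} < N^{(3)}, then k > 0. -/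
open Finset Real Topology

/-!
At an optimum the marginal losses `β i * γ i * N i ^ (-γ i - 1)` all equal one Lagrange
multiplier `λ`, so `log N i = (log (β i * γ i) - log λ) / (γ i + 1)`: every optimal allocation
lies on the curve `s ↦ lagrangeAllocation β γ s` with `s = log λ`. Along this curve the ratio of
two allocations is `exp ((s - t) / (γ i + 1))`, which gives `k = (s₂ - s₃) / (s₁ - s₂)`; the
budget is antitone in `s`, so increasing budgets force `s₁ > s₂ > s₃` and `k > 0`.
-/

theorem hasDerivAt_eq_of_forall_sum_le {ι : Type*} [Fintype ι]
    {g : ι → ℝ → ℝ} {g' : ι → ℝ} {v : ι → ℝ} {N : ℝ}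
    (hg : ∀ k, HasDerivAt (g k) (g' k) (v k)) (hv : ∀ k, 0 < v k) (hsum : ∑ k, v k = N)
    (hmin : ∀ w : ι → ℝ, (∀ k, 0 < w k) → ∑ k, w k = N → ∑ k, g k (v k) ≤ ∑ k, g k (w k))
    (i j : ι) : g' i = g' j := by
  classical
  set d : ι → ℝ := Pi.single i 1 - Pi.single j 1
  have hd : ∑ k, d k = 0 := by simp [d]
  have hpos : ∀ᶠ t in 𝓝 (0 : ℝ), ∀ k, 0 < v k + t * d k := by
    refine Filter.eventually_all.2 fun k => ?_
    have hline : Filter.Tendsto (fun t : ℝ => v k + t * d k) (𝓝 0) (𝓝 (v k)) :=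
      (continuous_const.add (continuous_id.mul continuous_const)).tendsto' 0 _ (by simp)
    exact hline.eventually (lt_mem_nhds (hv k))
  have hloc : IsLocalMin (fun t => ∑ k, g k (v k + t * d k)) 0 := by
    filter_upwards [hpos] with t ht
    simpa using hmin _ ht (by simp [sum_add_distrib, ← mul_sum, hd, hsum])
  have hderiv : HasDerivAt (fun t => ∑ k, g k (v k + t * d k)) (∑ k, g' k * d k) 0 := by
    refine HasDerivAt.fun_sum fun k _ => ?_
    have hline := ((hasDerivAt_id (0 : ℝ)).mul_const (d k)).const_add (v k)
    exact (hg k).comp_of_eq 0 hline (by simp) |>.congr_deriv (by simp)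
  simpa [d, mul_sub, sum_sub_distrib, sub_eq_zero, Pi.single_apply] using
    hloc.hasDerivAt_eq_zero hderiv

section LagrangeAllocation

variable {ι : Type*} (β γ : ι → ℝ)

/-- The allocation `(β i * γ i / λ) ^ (γ i + 1)⁻¹` at Lagrange multiplier `λ = exp s`. -/
noncomputable def lagrangeAllocation (s : ℝ) (i : ι) : ℝ :=
  exp ((log (β i * γ i) - s) / (γ i + 1))

theorem lagrangeAllocation_div (s t : ℝ) (i : ι) :
    lagrangeAllocation β γ t i / lagrangeAllocation β γ s i = exp ((s - t) / (γ i + 1)) := by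
  rw [lagrangeAllocation, lagrangeAllocation, ← exp_sub]
  ring_nf

variable {β γ}

theorem antitone_sum_lagrangeAllocation [Fintype ι] (hγ : ∀ i, -1 < γ i) :
    Antitone fun s => ∑ i, lagrangeAllocation β γ s i := fun s t hst =>
  sum_le_sum fun i _ => exp_le_exp.2 <|
    div_le_div_of_nonneg_right (by linarith) (by linarith [hγ i])

theorem eq_lagrangeAllocation_of_marginal_eq (hβγ : ∀ i, 0 < β i * γ i) (hγ : ∀ i, γ i + 1 ≠ 0)
    {v : ι → ℝ} (hv : ∀ i, 0 < v i) {μ : ℝ}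
    (hmarg : ∀ i, β i * γ i * v i ^ (-γ i - 1) = μ) :
    v = lagrangeAllocation β γ (log μ) := by
  funext i
  have hlog := congrArg log (hmarg i)
  rw [log_mul (hβγ i).ne' (rpow_pos_of_pos (hv i) _).ne', log_rpow (hv i)] at hlog
  have hlog_v : (log (β i * γ i) - (log (β i * γ i) + (-γ i - 1) * log (v i))) / (γ i + 1)
      = log (v i) := by
    field_simp [hγ i]
    ring
  rw [lagrangeAllocation, ← hlog, hlog_v, exp_log (hv i)]

end LagrangeAllocation

theorem exists_eq_lagrangeAllocation {ι : Type*} [Fintype ι] {β γ : ι → ℝ}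
    (hβ : ∀ i, 0 < β i) (hγ : ∀ i, 0 < γ i) {N : ℝ} {v : ι → ℝ} (hv : ∀ i, 0 < v i)
    (hsum : ∑ i, v i = N)
    (hmin : ∀ w : ι → ℝ, (∀ i, 0 < w i) → ∑ i, w i = N →
      ∑ i, β i * v i ^ (-γ i) ≤ ∑ i, β i * w i ^ (-γ i)) :
    ∃ s, v = lagrangeAllocation β γ s := by
  rcases isEmpty_or_nonempty ι with hι | ⟨⟨i₀⟩⟩
  · exact ⟨0, Subsingleton.elim _ _⟩
  have hmarg : ∀ i, β i * γ i * v i ^ (-γ i - 1) = β i₀ * γ i₀ * v i₀ ^ (-γ i₀ - 1) := by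
    intro i
    have hderiv_eq := hasDerivAt_eq_of_forall_sum_le
      (fun k => ((hasDerivAt_rpow_const (p := -γ k) (Or.inl (hv k).ne')).const_mul (β k)))
      hv hsum hmin i i₀
    linarith
  exact ⟨_, eq_lagrangeAllocation_of_marginal_eq (fun i => mul_pos (hβ i) (hγ i))
    (fun i => by linarith [hγ i]) hv hmarg⟩

theorem optimal_allocation_exponential_family_general (m : ℕ)
    (β γ : Fin m → ℝ) (hβ : ∀ i, 0 < β i) (hγ : ∀ i, 0 < γ i)
    (N₁ N₂ N₃ : ℝ) (hne : N₁ ≠ N₂)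
    (x : Fin m → ℝ) (hx_pos : ∀ i, 0 < x i) (hx_sum : ∑ i, x i = N₁)
    (hx_min : ∀ w : Fin m → ℝ, (∀ i, 0 < w i) → ∑ i, w i = N₁ →
      ∑ i, β i * x i ^ (-γ i) ≤ ∑ i, β i * w i ^ (-γ i))
    (y : Fin m → ℝ) (hy_pos : ∀ i, 0 < y i) (hy_sum : ∑ i, y i = N₂)
    (hy_min : ∀ w : Fin m → ℝ, (∀ i, 0 < w i) → ∑ i, w i = N₂ →
      ∑ i, β i * y i ^ (-γ i) ≤ ∑ i, β i * w i ^ (-γ i))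
    (z : Fin m → ℝ) (hz_pos : ∀ i, 0 < z i) (hz_sum : ∑ i, z i = N₃)
    (hz_min : ∀ w : Fin m → ℝ, (∀ i, 0 < w i) → ∑ i, w i = N₃ →
      ∑ i, β i * z i ^ (-γ i) ≤ ∑ i, β i * w i ^ (-γ i)) :
    ∃ k : ℝ, (∀ i, z i = y i * (y i / x i) ^ k) ∧
      (N₁ < N₂ → N₂ < N₃ → 0 < k) := by
  obtain ⟨s₁, rfl⟩ := exists_eq_lagrangeAllocation hβ hγ hx_pos hx_sum hx_min
  obtain ⟨s₂, rfl⟩ := exists_eq_lagrangeAllocation hβ hγ hy_pos hy_sum hy_min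
  obtain ⟨s₃, rfl⟩ := exists_eq_lagrangeAllocation hβ hγ hz_pos hz_sum hz_min
  subst hx_sum hy_sum hz_sum
  have hs : s₁ - s₂ ≠ 0 := sub_ne_zero.2 fun h => hne (by rw [h])
  have hanti := antitone_sum_lagrangeAllocation (β := β) fun i => by linarith [hγ i]
  refine ⟨(s₂ - s₃) / (s₁ - s₂), fun i => ?_, fun h₁₂ h₂₃ => ?_⟩
  · have hexp : (s₁ - s₂) / (γ i + 1) * ((s₂ - s₃) / (s₁ - s₂)) = (s₂ - s₃) / (γ i + 1) := by
      field_simp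
    rw [lagrangeAllocation_div, ← exp_mul, hexp, ← lagrangeAllocation_div β γ s₂ s₃,
      mul_div_cancel₀ _ (hy_pos i).ne']
  · exact div_pos (sub_pos.2 (hanti.reflect_lt h₂₃)) (sub_pos.2 (hanti.reflect_lt h₁₂))

/-- Converse of the scale-dependent composition theorem: the optimal allocation
at any third budget lies on the one-parameter exponential family generated by
the optimal allocations at two distinct budgets, with exponent `k > 0` when the
budgets are increasing. -/
theorem optimal_allocation_exponential_family (m : ℕ) (hm : 1 ≤ m)
    (β γ : Fin m → ℝ) (hβ : ∀ i, 0 < β i) (hγ : ∀ i, 0 < γ i)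
    (N₁ N₂ N₃ : ℝ) (hN₁ : 0 < N₁) (hN₂ : 0 < N₂) (hN₃ : 0 < N₃) (hne : N₁ ≠ N₂)
    (x : Fin m → ℝ) (hx_pos : ∀ i, 0 < x i) (hx_sum : ∑ i, x i = N₁)
    (hx_min : ∀ w : Fin m → ℝ, (∀ i, 0 < w i) → ∑ i, w i = N₁ →
      ∑ i, β i * x i ^ (-γ i) ≤ ∑ i, β i * w i ^ (-γ i))
    (y : Fin m → ℝ) (hy_pos : ∀ i, 0 < y i) (hy_sum : ∑ i, y i = N₂)
    (hy_min : ∀ w : Fin m → ℝ, (∀ i, 0 < w i) → ∑ i, w i = N₂ →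
      ∑ i, β i * y i ^ (-γ i) ≤ ∑ i, β i * w i ^ (-γ i))
    (z : Fin m → ℝ) (hz_pos : ∀ i, 0 < z i) (hz_sum : ∑ i, z i = N₃)
    (hz_min : ∀ w : Fin m → ℝ, (∀ i, 0 < w i) → ∑ i, w i = N₃ →
      ∑ i, β i * z i ^ (-γ i) ≤ ∑ i, β i * w i ^ (-γ i)) :
    ∃ k : ℝ, (∀ i, z i = y i * (y i / x i) ^ k) ∧
      (N₁ < N₂ → N₂ < N₃ → 0 < k) :=
  optimal_allocation_exponential_family_general m β γ hβ hγ N₁ N₂ N₃ hne x hx_pos hx_sum hx_min y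
    hy_pos hy_sum hy_min z hz_pos hz_sum hz_min
end

section
/- Let m ≥ 1, β_i > 0, γ_i > 0 for i = 1,…,m, and let 0 < N^{(1)} < N^{(2)} be two budgets. Let N*(N^{(1)}) and N*(N^{(2)}) be the optimal allocations (minimizers of f(N) = ∑_{i=1}^m β_i · N_i^{-γ_i} on S(N^{(1)}) and S(N^{(2)}) respectively). Then the optimal allocation is strictly increasing in the budget in every coordinate: N_i*(N^{(1)}) < N_i*(N^{(2)}) for every index i. -/
/-! At a minimizer all marginal costs `β i * (-γ i) * N_i ^ (-γ i - 1)` coincide: shifting mass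
from one coordinate to another is feasible in both directions, so the derivative along it
vanishes. Each marginal cost is strictly increasing in its own coordinate. A larger budget makes
some coordinate larger, hence raises the common marginal cost, hence raises every coordinate. -/

open Finset Real

section Simplex

variable {ι : Type*} [Fintype ι]

theorem hasDerivAt_eq_of_forall_sum_le_s10 [DecidableEq ι] {f : ι → ℝ → ℝ} {f' : ι → ℝ}
    {x : ι → ℝ} (hx : ∀ k, 0 < x k) (hf : ∀ k, HasDerivAt (f k) (f' k) (x k))
    (hmin : ∀ z : ι → ℝ, (∀ k, 0 < z k) → ∑ k, z k = ∑ k, x k →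
      ∑ k, f k (x k) ≤ ∑ k, f k (z k))
    (i j : ι) : f' i = f' j := by
  set v : ι → ℝ := Pi.single i 1 - Pi.single j 1
  have hv : ∑ k, v k = 0 := by simp [v, sum_sub_distrib]
  have hderiv : HasDerivAt (fun t => ∑ k, f k (x k + t * v k)) (∑ k, f' k * v k) 0 :=
    HasDerivAt.fun_sum fun k _ => (hf k).comp_of_eq 0
      ((hasDerivAt_mul_const (v k)).const_add (x k)) (by simp)
  have hpos : ∀ᶠ t in nhds (0 : ℝ), ∀ k, 0 < x k + t * v k :=
    Filter.eventually_all.2 fun k => ((continuous_const.add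
      (continuous_id.mul continuous_const)).tendsto' 0 (x k) (by simp)).eventually_const_lt (hx k)
  have hlocal : IsLocalMin (fun t => ∑ k, f k (x k + t * v k)) 0 := by
    filter_upwards [hpos] with t ht
    simpa using hmin _ ht (by simp [sum_add_distrib, ← mul_sum, hv])
  have hzero := hlocal.hasDerivAt_eq_zero hderiv
  simp only [v, Pi.sub_apply, Pi.single_apply, mul_sub, mul_ite, mul_one, mul_zero,
    sum_sub_distrib, sum_ite_eq', mem_univ, ↓reduceIte] at hzero
  linarith

theorem forall_lt_of_marginal_eq {g : ι → ℝ → ℝ} {s : Set ℝ} (hg : ∀ k, StrictMonoOn (g k) s)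
    {x y : ι → ℝ} (hxs : ∀ k, x k ∈ s) (hys : ∀ k, y k ∈ s)
    (hgx : ∀ i j, g i (x i) = g j (x j)) (hgy : ∀ i j, g i (y i) = g j (y j))
    (hsum : ∑ k, x k < ∑ k, y k) (i : ι) : x i < y i := by
  obtain ⟨k, -, hk⟩ := exists_lt_of_sum_lt hsum
  have hgk : g i (x i) < g i (y i) := by
    rw [hgx i k, hgy i k]
    exact hg k (hxs k) (hys k) hk
  exact (hg i).lt_iff_lt (hxs i) (hys i) |>.1 hgk

end Simplex

theorem hasDerivAt_mul_rpow_neg (b c : ℝ) {t : ℝ} (ht : 0 < t) :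
    HasDerivAt (fun s => b * s ^ (-c)) (b * (-c * t ^ (-c - 1))) t :=
  (Real.hasDerivAt_rpow_const (Or.inl ht.ne')).const_mul b

theorem strictMonoOn_mul_rpow_neg {b c : ℝ} (hb : 0 < b) (hc : 0 < c) :
    StrictMonoOn (fun t => b * (-c * t ^ (-c - 1))) (Set.Ioi 0) := fun s hs t ht hst => by
  have : t ^ (-c - 1) < s ^ (-c - 1) := Real.rpow_lt_rpow_of_neg hs hst (by linarith)
  have : 0 < b * c := mul_pos hb hc
  nlinarith

theorem optimal_allocation_strictMono_general (m : ℕ)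
    (β γ : Fin m → ℝ) (hβ : ∀ i, 0 < β i) (hγ : ∀ i, 0 < γ i)
    (N₁ N₂ : ℝ) (hlt : N₁ < N₂)
    (x : Fin m → ℝ) (hx_pos : ∀ i, 0 < x i) (hx_sum : ∑ i, x i = N₁)
    (hx_min : ∀ z : Fin m → ℝ, (∀ i, 0 < z i) → ∑ i, z i = N₁ →
      ∑ i, β i * x i ^ (-γ i) ≤ ∑ i, β i * z i ^ (-γ i))
    (y : Fin m → ℝ) (hy_pos : ∀ i, 0 < y i) (hy_sum : ∑ i, y i = N₂)
    (hy_min : ∀ z : Fin m → ℝ, (∀ i, 0 < z i) → ∑ i, z i = N₂ →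
      ∑ i, β i * y i ^ (-γ i) ≤ ∑ i, β i * z i ^ (-γ i)) :
    ∀ i, x i < y i := by
  have hx_marginal := hasDerivAt_eq_of_forall_sum_le_s10 hx_pos
    (fun k => hasDerivAt_mul_rpow_neg (β k) (γ k) (hx_pos k)) (hx_sum ▸ hx_min)
  have hy_marginal := hasDerivAt_eq_of_forall_sum_le_s10 hy_pos
    (fun k => hasDerivAt_mul_rpow_neg (β k) (γ k) (hy_pos k)) (hy_sum ▸ hy_min)
  exact forall_lt_of_marginal_eq (fun k => strictMonoOn_mul_rpow_neg (hβ k) (hγ k))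
    hx_pos hy_pos hx_marginal hy_marginal (hx_sum ▸ hy_sum ▸ hlt)

/-- The optimal allocation is strictly increasing in the budget in every
coordinate. -/
theorem optimal_allocation_strictMono (m : ℕ) (hm : 1 ≤ m)
    (β γ : Fin m → ℝ) (hβ : ∀ i, 0 < β i) (hγ : ∀ i, 0 < γ i)
    (N₁ N₂ : ℝ) (hN₁ : 0 < N₁) (hlt : N₁ < N₂)
    (x : Fin m → ℝ) (hx_pos : ∀ i, 0 < x i) (hx_sum : ∑ i, x i = N₁)
    (hx_min : ∀ z : Fin m → ℝ, (∀ i, 0 < z i) → ∑ i, z i = N₁ →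
      ∑ i, β i * x i ^ (-γ i) ≤ ∑ i, β i * z i ^ (-γ i))
    (y : Fin m → ℝ) (hy_pos : ∀ i, 0 < y i) (hy_sum : ∑ i, y i = N₂)
    (hy_min : ∀ z : Fin m → ℝ, (∀ i, 0 < z i) → ∑ i, z i = N₂ →
      ∑ i, β i * y i ^ (-γ i) ≤ ∑ i, β i * z i ^ (-γ i)) :
    ∀ i, x i < y i :=
  optimal_allocation_strictMono_general m β γ hβ hγ N₁ N₂ hlt x hx_pos hx_sum hx_min y hy_pos hy_sum
    hy_min
end
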